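/- Let q = 2^{2m+1} and let Δ be the Suzuki ovoid. The map w defined by w(η₁,η₂,η₃) = (η₂/η₃, η₁/η₃, 1/η₃) for η₃ ≠ 0, and swapping ∞ with (0,0,0), is a well-defined involution of Δ. -/
import Mathlib


/-- The field automorphism `σ : ξ ↦ ξ^(2^(m+1))` of `𝔽_q`, `q = 2^(2m+1)`. -/
def suzSigma (F : Type) [Field F] (m : ℕ) (x : F) : F := x ^ 2 ^ (m + 1)

/-- The Suzuki ovoid `Δ = {(η₁,η₂,η₃) : η₃ = η₁η₂ + η₁^(σ+2) + η₂^σ} ∪ {∞}`,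
with `∞` encoded as `none`. -/
def suzukiOvoid (F : Type) [Field F] (m : ℕ) : Set (Option (F × F × F)) :=
  {x | x = none ∨ ∃ η₁ η₂ η₃ : F,
      x = some (η₁, η₂, η₃) ∧
        η₃ = η₁ * η₂ + suzSigma F m η₁ * η₁ ^ 2 + suzSigma F m η₂}
/-- The map `w`, swapping `∞` with `(0,0,0)` and sending `(η₁,η₂,η₃)` with
`η₃ ≠ 0` to `(η₂/η₃, η₁/η₃, 1/η₃)`. -/
def suzW (F : Type) [Field F] [DecidableEq F] :
    Option (F × F × F) → Option (F × F × F)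
  | none => some (0, 0, 0)
  | some (η₁, η₂, η₃) =>
      if η₃ = 0 then none else some (η₂ / η₃, η₁ / η₃, 1 / η₃)

section aux
variable {F : Type} [Field F]

lemma suz_key [CharP F 2] (m : ℕ)
    (hs : ∀ x : F, (x ^ 2^(m+1)) ^ 2^(m+1) = x ^ 2)
    (a b t : F) (ht : t = a*b + a^(2^(m+1))*a^2 + b^(2^(m+1))) :
    t ^ (2^(m+1)) * t = a*b*t^(2^(m+1)) + b^(2^(m+1))*b^2 + a^(2^(m+1))*t^2 := by
  have h2 : (2:F) = 0 := by exact_mod_cast CharP.cast_eq_zero F 2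
  have hts : t ^ 2^(m+1) = a^(2^(m+1))*b^(2^(m+1)) + a^2*(a^(2^(m+1)))^2 + b^2 := by
    subst ht
    rw [add_pow_char_pow, add_pow_char_pow, mul_pow, mul_pow, hs a, hs b]
    congr 2
    rw [← pow_mul a 2, mul_comm 2, pow_mul]
  rw [hts, ht]
  generalize a ^ 2^(m+1) = A
  generalize b ^ 2^(m+1) = B
  linear_combination (-(a*b*A*(a^2*A+B)))*h2

lemma suz_zero [CharP F 2] (m : ℕ)
    (hs : ∀ x : F, (x ^ 2^(m+1)) ^ 2^(m+1) = x ^ 2)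
    (a b : F) (h : a*b + a^(2^(m+1))*a^2 + b^(2^(m+1)) = 0) :
    a = 0 ∧ b = 0 := by
  have h2 : (2:F) = 0 := by exact_mod_cast CharP.cast_eq_zero F 2
  have hspos : 2^(m+1) ≠ 0 := by positivity
  have hσ : a^(2^(m+1))*b^(2^(m+1)) + a^2*(a^(2^(m+1)))^2 + b^2 = 0 := by
    have h' := congrArg (· ^ 2^(m+1)) h
    simp only [zero_pow hspos] at h'
    rw [add_pow_char_pow, add_pow_char_pow, mul_pow, mul_pow, hs a, hs b,
        ← pow_mul a 2, mul_comm 2, pow_mul] at h'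
    exact h'
  have hb : b * (a^(2^(m+1))*a + b) = 0 := by
    linear_combination a^(2^(m+1))*h + hσ - ((a^(2^(m+1)))^2*a^2 + a^(2^(m+1))*b^(2^(m+1)))*h2
  rcases mul_eq_zero.mp hb with hb0 | hab
  · subst hb0
    have : a^(2^(m+1))*a^2 = 0 := by
      linear_combination h
    rcases mul_eq_zero.mp this with h1 | h1 <;>
      exact ⟨by simpa [pow_eq_zero_iff, hspos] using h1, rfl⟩
  · have hbb : b = a^(2^(m+1))*a := by
      linear_combination hab - (a^(2^(m+1))*a)*h2
    rw [hbb, mul_pow, hs] at h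
    have key : a^(2^(m+1)) * a^2 = 0 := by
      linear_combination h - (a^(2^(m+1))*a^2)*h2
    have ha : a = 0 := by
      rcases mul_eq_zero.mp key with h1 | h1
      · simpa [pow_eq_zero_iff, hspos] using h1
      · simpa using h1
    exact ⟨ha, by simp [hbb, ha, zero_pow hspos]⟩

end aux

/-- `w` is a well-defined involution of the Suzuki ovoid `Δ`. -/
theorem suzW_involution (F : Type) [Field F] [Fintype F] [DecidableEq F] (m : ℕ)
    (hF : Fintype.card F = 2 ^ (2 * m + 1)) :
    Set.MapsTo (suzW F) (suzukiOvoid F m) (suzukiOvoid F m) ∧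
      ∀ x ∈ suzukiOvoid F m, suzW F (suzW F x) = x := by
  haveI : CharP F (ringChar F) := ringChar.charP F
  obtain ⟨n, hp, hn⟩ := FiniteField.card F (ringChar F)
  have hr2 : ringChar F = 2 := by
    have hdvd : ringChar F ∣ 2 ^ (2*m+1) := by
      rw [← hF, hn]
      exact dvd_pow_self _ n.pos.ne'
    have := hp.dvd_of_dvd_pow hdvd
    exact (Nat.prime_dvd_prime_iff_eq hp Nat.prime_two).mp this
  haveI : CharP F 2 := hr2 ▸ ringChar.charP F
  have hs : ∀ x : F, (x ^ 2^(m+1)) ^ 2^(m+1) = x ^ 2 := by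
    intro x
    have hcard : x ^ (2 ^ (2*m+1)) = x := by rw [← hF]; exact FiniteField.pow_card x
    calc (x ^ 2^(m+1)) ^ 2^(m+1) = (x ^ (2^(2*m+1))) ^ 2 := by
          rw [← pow_mul, ← pow_mul]; ring_nf
      _ = x ^ 2 := by rw [hcard]
  have hspos : 2^(m+1) ≠ 0 := by positivity
  have hzero : ∀ a b : F, (0:F) = a * b + suzSigma F m a * a ^ 2 + suzSigma F m b →
      a = 0 ∧ b = 0 := by
    intro a b h
    exact suz_zero m hs a b h.symm
  constructor
  · rintro x (hx | ⟨a, b, c, rfl, hc⟩)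
    · subst hx
      refine Or.inr ⟨0, 0, 0, rfl, ?_⟩
      simp [suzSigma, zero_pow hspos]
    · simp only [suzW]
      by_cases hc0 : c = 0
      · simp only [hc0, if_pos rfl]
        exact Or.inl rfl
      · simp only [if_neg hc0]
        refine Or.inr ⟨b/c, a/c, 1/c, rfl, ?_⟩
        have key := suz_key m hs a b c (by rw [hc]; rfl)
        have hcs : c ^ 2^(m+1) ≠ 0 := pow_ne_zero _ hc0
        simp only [suzSigma, div_pow]
        generalize hA : a ^ 2^(m+1) = A at key
        generalize hB : b ^ 2^(m+1) = B at key
        generalize hC : c ^ 2^(m+1) = C at key hcs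
        have hcc : c * c ≠ 0 := mul_ne_zero hc0 hc0
        have hCc2 : C * c ^ 2 ≠ 0 := mul_ne_zero hcs (pow_ne_zero 2 hc0)
        rw [div_mul_div_comm, div_mul_div_comm, ← sq c,
          div_add_div _ _ (pow_ne_zero 2 hc0) hCc2,
          div_add_div _ _ (mul_ne_zero (pow_ne_zero 2 hc0) hCc2) hcs,
          div_eq_div_iff hc0 (mul_ne_zero (mul_ne_zero (pow_ne_zero 2 hc0) hCc2) hcs)]
        linear_combination C * c^3 * key
  · rintro x (hx | ⟨a, b, c, rfl, hc⟩)
    · subst hx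
      simp [suzW]
    · by_cases hc0 : c = 0
      · subst hc0
        obtain ⟨ha, hb⟩ := hzero a b hc
        simp [suzW, ha, hb]
      · have h1 : (1:F)/c ≠ 0 := one_div_ne_zero hc0
        simp only [suzW, if_neg hc0, if_neg h1]
        congr 1
        field_simp
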